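/- arXiv:2101.03101 — 2 statements merged into one kernel-verified Lean document; each statement's English description precedes it below -/
import Mathlib

section
/- Closed form and rapid decay of W_ν on vertical lines. Let ν be a positive integer. Then for Re(s) > 0 one has W_ν(s) = Γ(ν) Σ_{l=0}^{ν−1} (2^l/l!) Γ(s+l), where Γ denotes the Gamma function. Consequently, for every σ > 0 and every μ > 0, |W_ν(s)| = O(|Im(s)|^{−μ}) as |Im(s)| → ∞ on the line Re(s) = σ. -/
open Complex MeasureTheory Set Filter

noncomputable section

/-- The upper half-plane, as a subset of `ℂ`. -/
def UHP : Set ℂ := {τ : ℂ | 0 < τ.im}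

/-- The weight-`k` slash operator for the matrix `(a b; c d)` (assumed of positive
determinant): `(f|_k γ)(τ) = (det γ)^(k/2) (cτ+d)^(-k) f((aτ+b)/(cτ+d))`. -/
def slash (k : ℤ) (a b c d : ℂ) (f : ℂ → ℂ) : ℂ → ℂ := fun τ =>
  (a * d - b * c) ^ ((k : ℂ) / 2) * (c * τ + d) ^ (-k) * f ((a * τ + b) / (c * τ + d))

/-- The Fricke involution `f ↦ f|_k ω(M)` with `ω(M) = (0 -1; M 0)`. -/
def fricke (k : ℤ) (M : ℕ) (f : ℂ → ℂ) : ℂ → ℂ := slash k 0 (-1) (M : ℂ) 0 f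

/-- Partial derivative in the real (`u`) direction. -/
def pdU (f : ℂ → ℂ) (τ : ℂ) : ℂ := fderiv ℝ f τ 1

/-- Partial derivative in the imaginary (`v`) direction. -/
def pdV (f : ℂ → ℂ) (τ : ℂ) : ℂ := fderiv ℝ f τ Complex.I

/-- Wirtinger derivative `∂/∂τ`. -/
def wirt (f : ℂ → ℂ) (τ : ℂ) : ℂ := (pdU f τ - Complex.I * pdV f τ) / 2

/-- Wirtinger derivative `∂/∂τ̄`. -/
def wirtBar (f : ℂ → ℂ) (τ : ℂ) : ℂ := (pdU f τ + Complex.I * pdV f τ) / 2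

/-- The weight-`k` hyperbolic Laplacian
`Δ_k = -v²(∂²/∂u² + ∂²/∂v²) + ikv(∂/∂u + i ∂/∂v)`. -/
def hypLaplacian (k : ℤ) (f : ℂ → ℂ) (τ : ℂ) : ℂ :=
  -(τ.im : ℂ) ^ 2 * (pdU (pdU f) τ + pdV (pdV f) τ)
    + Complex.I * (k : ℂ) * (τ.im : ℂ) * (pdU f τ + Complex.I * pdV f τ)

/-- Maass raising operator `R_k = 2i ∂/∂τ + k/v`. -/
def Rop (k : ℤ) (f : ℂ → ℂ) (τ : ℂ) : ℂ :=
  2 * Complex.I * wirt f τ + (k : ℂ) / (τ.im : ℂ) * f τ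

/-- Maass lowering operator `L_k = -2iv² ∂/∂τ̄`. -/
def Lop (f : ℂ → ℂ) (τ : ℂ) : ℂ := -2 * Complex.I * (τ.im : ℂ) ^ 2 * wirtBar f τ

/-- Shadow operator `ξ_k f = 2i v^k conj(∂f/∂τ̄)`. -/
def xiOp (k : ℤ) (f : ℂ → ℂ) (τ : ℂ) : ℂ :=
  2 * Complex.I * (τ.im : ℂ) ^ k * (starRingEnd ℂ) (wirtBar f τ)

/-- The operator `D = (1/(2πi)) ∂/∂τ`. -/
def Dop (f : ℂ → ℂ) : ℂ → ℂ := fun τ => wirt f τ / (2 * Real.pi * Complex.I)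

/-- Modularity: `f|_k γ = χ(d) f` for all `γ = (a b; c d) ∈ Γ₀(N)`. -/
def SlashInv (k : ℤ) (N : ℕ) (χ : DirichletCharacter ℂ N) (f : ℂ → ℂ) : Prop :=
  ∀ a b c d : ℤ, a * d - b * c = 1 → (N : ℤ) ∣ c → ∀ τ ∈ UHP,
    slash k (a : ℂ) (b : ℂ) (c : ℂ) (d : ℂ) f τ = χ (d : ZMod N) * f τ

/-- At every cusp, `f|_k γ` grows at most linear-exponentially:
`(f|_k γ)(τ) = O(e^(εv))` as `v → ∞`. -/
def ExpGrowthAtCusps (k : ℤ) (f : ℂ → ℂ) : Prop :=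
  ∀ a b c d : ℤ, a * d - b * c = 1 →
    ∃ ε > (0 : ℝ), ∃ C v₀ : ℝ, ∀ τ ∈ UHP, v₀ ≤ τ.im →
      ‖slash k (a : ℂ) (b : ℂ) (c : ℂ) (d : ℂ) f τ‖ ≤ C * Real.exp (ε * τ.im)

/-- At every cusp, `f|_k γ` has at most polynomial growth as `v → ∞`. -/
def PolyGrowthAtCusps (k : ℤ) (f : ℂ → ℂ) : Prop :=
  ∀ a b c d : ℤ, a * d - b * c = 1 →
    ∃ A C v₀ : ℝ, ∀ τ ∈ UHP, v₀ ≤ τ.im →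
      ‖slash k (a : ℂ) (b : ℂ) (c : ℂ) (d : ℂ) f τ‖ ≤ C * τ.im ^ A

/-- At every cusp, `f|_k γ` stays bounded as `v → ∞`. -/
def BoundedAtCusps (k : ℤ) (f : ℂ → ℂ) : Prop :=
  ∀ a b c d : ℤ, a * d - b * c = 1 →
    ∃ C v₀ : ℝ, ∀ τ ∈ UHP, v₀ ≤ τ.im →
      ‖slash k (a : ℂ) (b : ℂ) (c : ℂ) (d : ℂ) f τ‖ ≤ C

/-- Harmonic Maass forms of manageable growth: the space `H^!_k(N,χ)`. -/
def IsHarmonicMaassMG (k : ℤ) (N : ℕ) (χ : DirichletCharacter ℂ N) (f : ℂ → ℂ) : Prop :=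
  ContDiffOn ℝ (⊤ : ℕ∞) f UHP ∧ SlashInv k N χ f ∧ (∀ τ ∈ UHP, hypLaplacian k f τ = 0) ∧
    ExpGrowthAtCusps k f

/-- Harmonic Maass forms of polynomial growth: the space `H^#_k(N,χ)`. -/
def IsHMFPolyGrowth (k : ℤ) (N : ℕ) (χ : DirichletCharacter ℂ N) (f : ℂ → ℂ) : Prop :=
  IsHarmonicMaassMG k N χ f ∧ PolyGrowthAtCusps k f

/-- Holomorphic modular forms of weight `k`: the space `M_k(N,χ)`. -/
def IsHolomorphicModularForm (k : ℤ) (N : ℕ) (χ : DirichletCharacter ℂ N) (f : ℂ → ℂ) : Prop :=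
  DifferentiableOn ℂ f UHP ∧ SlashInv k N χ f ∧ BoundedAtCusps k f

/-- The (real) incomplete gamma function `Γ(ν, x) = ∫_x^∞ e^(-t) t^(ν-1) dt`. -/
def incGamma (ν : ℝ) (x : ℝ) : ℝ := ∫ t in Ioi x, Real.exp (-t) * t ^ (ν - 1)

/-- The series `Σ_{n≥0} c⁺(n) qⁿ + c⁻(0) v^(1-k) + Σ_{n<0} c⁻(n) Γ(1-k, -4πnv) qⁿ`,
with `cm j` standing for `c⁻(-j)`. -/
def maassSeries (k : ℤ) (cp cm : ℕ → ℂ) : ℂ → ℂ := fun τ =>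
  (∑' n : ℕ, cp n * Complex.exp (2 * Real.pi * Complex.I * n * τ))
    + cm 0 * (τ.im : ℂ) ^ (1 - k)
    + ∑' n : ℕ, cm (n + 1) * (incGamma ((1 - k : ℤ) : ℝ) (4 * Real.pi * (n + 1) * τ.im) : ℂ)
        * Complex.exp (-(2 * Real.pi * Complex.I * (n + 1) * τ))

/-- `f` is given on `ℍ` by the harmonic-Maass-type Fourier series with
holomorphic-part coefficients `cp n = c⁺(n)` and nonholomorphic-part
coefficients `cm n = c⁻(-n)`. -/
def FourierShape (k : ℤ) (cp cm : ℕ → ℂ) (f : ℂ → ℂ) : Prop :=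
  ∀ τ ∈ UHP, f τ = maassSeries k cp cm τ

/-- Coefficients bounded by `O(n^α)`. -/
def CoeffBound (α : ℝ) (c : ℕ → ℂ) : Prop :=
  ∃ C : ℝ, ∀ n : ℕ, 1 ≤ n → ‖c n‖ ≤ C * (n : ℝ) ^ α

/-- Dirichlet series `Σ_{n≥1} c(n) n^(-s)`. -/
def LSer (c : ℕ → ℂ) (s : ℂ) : ℂ := ∑' n : ℕ, c (n + 1) / ((n : ℂ) + 1) ^ s

/-- `W_ν(s) = ∫₀^∞ Γ(ν,2x) eˣ x^(s-1) dx`. -/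
def Wnu (ν : ℝ) (s : ℂ) : ℂ :=
  ∫ x in Ioi (0 : ℝ), ((incGamma ν (2 * x) * Real.exp x : ℝ) : ℂ) * (x : ℂ) ^ (s - 1)

/-- Completed `L`-function `Λ_N(f,s)` (with twisting conductor `m`; `m = 1` is
the untwisted case): `(m√N/(2π))^s [Γ(s) L⁺(s) + W_{1-k}(s) L⁻(s)]`. -/
def LambdaN (N : ℕ) (k : ℤ) (m : ℕ) (cp cm : ℕ → ℂ) (s : ℂ) : ℂ :=
  ((m * Real.sqrt N / (2 * Real.pi) : ℝ) : ℂ) ^ s *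
    (Complex.Gamma s * LSer cp s + Wnu ((1 - k : ℤ) : ℝ) s * LSer cm s)

/-- `Ξ_N(f,s) = (m√N/(2π))^s [Γ(s+1) L⁺(s) - W_{1-k}(s+1) L⁻(s)]`. -/
def XiN (N : ℕ) (k : ℤ) (m : ℕ) (cp cm : ℕ → ℂ) (s : ℂ) : ℂ :=
  ((m * Real.sqrt N / (2 * Real.pi) : ℝ) : ℂ) ^ s *
    (Complex.Gamma (s + 1) * LSer cp s - Wnu ((1 - k : ℤ) : ℝ) (s + 1) * LSer cm s)

/-- `Ω_N(f,s) = -2 Ξ_N(f,s) + k Λ_N(f,s)`. -/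
def OmegaN (N : ℕ) (k : ℤ) (m : ℕ) (cp cm : ℕ → ℂ) (s : ℂ) : ℂ :=
  -2 * XiN N k m cp cm s + (k : ℂ) * LambdaN N k m cp cm s

/-- Bounded on every vertical strip. -/
def BoundedVert (F : ℂ → ℂ) : Prop :=
  ∀ a b : ℝ, ∃ M : ℝ, ∀ s : ℂ, a ≤ s.re → s.re ≤ b → ‖F s‖ ≤ M

/-- `N^((1-k)/2)` as a complex number. -/
def Npow (N : ℕ) (k : ℤ) : ℂ := (N : ℂ) ^ ((1 - (k : ℂ)) / 2)

/-- Pole-correction terms for `Λ*`. -/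
def corrL (N : ℕ) (k : ℤ) (ι c0 d0 c0' d0' : ℂ) (s : ℂ) : ℂ :=
  c0 / s + ι * d0 / ((k : ℂ) - s) + c0' / Npow N k / (s - (k : ℂ) + 1)
    + ι * d0' / Npow N k / (1 - s)

/-- Pole-correction terms for `Ω*`. -/
def corrO (N : ℕ) (k : ℤ) (ι c0 d0 c0' d0' : ℂ) (s : ℂ) : ℂ :=
  (k : ℂ) * (c0 / s - ι * d0 / ((k : ℂ) - s) + c0' / Npow N k / (s - (k : ℂ) + 1)
    - ι * d0' / Npow N k / (1 - s))

/-- The pole-corrected function `L + corr` agrees away from `{0, k, 1, k-1}` with an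
entire function that is bounded on vertical strips. -/
def EntireBddCorrected (k : ℤ) (L corr : ℂ → ℂ) : Prop :=
  ∃ F : ℂ → ℂ, Differentiable ℂ F ∧ BoundedVert F ∧
    ∀ s : ℂ, s ≠ 0 → s ≠ (k : ℂ) → s ≠ 1 → s ≠ (k : ℂ) - 1 → F s = L s + corr s

/-- Condition (2)(a) of the main theorem: meromorphic continuation, functional
equations, and entire pole-corrected completions bounded on vertical strips. -/
def AnalyticPackage (N : ℕ) (k : ℤ) (α : ℝ) (cfp cfm cgp cgm : ℕ → ℂ) : Prop :=
  ∃ Lf Lg Of' Og : ℂ → ℂ,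
    (∀ s : ℂ, α + 1 < s.re → Lf s = LambdaN N k 1 cfp cfm s) ∧
    (∀ s : ℂ, α + 1 < s.re → Lg s = LambdaN N k 1 cgp cgm s) ∧
    (∀ s : ℂ, α + 1 < s.re → Of' s = OmegaN N k 1 cfp cfm s) ∧
    (∀ s : ℂ, α + 1 < s.re → Og s = OmegaN N k 1 cgp cgm s) ∧
    (∀ s : ℂ, Lf s = Complex.I ^ k * Lg ((k : ℂ) - s)) ∧
    (∀ s : ℂ, Of' s = -(Complex.I ^ k) * Og ((k : ℂ) - s)) ∧
    EntireBddCorrected k Lf (corrL N k (Complex.I ^ k) (cfp 0) (cgp 0) (cfm 0) (cgm 0)) ∧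
    EntireBddCorrected k Lg (corrL N k (Complex.I ^ (-k)) (cgp 0) (cfp 0) (cgm 0) (cfm 0)) ∧
    EntireBddCorrected k Of' (corrO N k (Complex.I ^ k) (cfp 0) (cgp 0) (cfm 0) (cgm 0)) ∧
    EntireBddCorrected k Og (corrO N k (Complex.I ^ (-k)) (cgp 0) (cfp 0) (cgm 0) (cfm 0))

/-- The complex conjugate of a Dirichlet character. -/
def conjChar {N : ℕ} (χ : DirichletCharacter ℂ N) : DirichletCharacter ℂ N :=
  χ.ringHomComp (starRingEnd ℂ)

/-- Twist of a coefficient sequence by a Dirichlet character. -/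
def twistC {m : ℕ} (ψ : DirichletCharacter ℂ m) (c : ℕ → ℂ) : ℕ → ℂ :=
  fun n => ψ (n : ZMod m) * c n

/-- The twisted Fourier series `f_ψ`. -/
def twistFn (k : ℤ) {m : ℕ} (ψ : DirichletCharacter ℂ m) (cp cm : ℕ → ℂ) : ℂ → ℂ :=
  maassSeries k (twistC ψ cp) (twistC ψ cm)

/-- The Gauss sum `τ(ψ) = Σ_{a=0}^{m-1} ψ(a) e^(2πia/m)`. -/
def gSum (m : ℕ) (ψ : DirichletCharacter ℂ m) : ℂ :=
  ∑ a ∈ Finset.range m, ψ (a : ZMod m) * Complex.exp (2 * Real.pi * Complex.I * a / m)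

/-- The analytic package for the `ψ`-twisted completed Dirichlet series: entire
continuations, bounded on vertical strips, with functional equations with
constant `Cψ`. -/
def TwistedPackage (N : ℕ) (k : ℤ) (α : ℝ) (m : ℕ) (ψ : DirichletCharacter ℂ m)
    (cfp cfm cgp cgm : ℕ → ℂ) (Cψ : ℂ) : Prop :=
  ∃ Lf Lg Of' Og : ℂ → ℂ,
    (∀ s : ℂ, α + 1 < s.re → Lf s = LambdaN N k m (twistC ψ cfp) (twistC ψ cfm) s) ∧
    (∀ s : ℂ, α + 1 < s.re →
      Lg s = LambdaN N k m (twistC (conjChar ψ) cgp) (twistC (conjChar ψ) cgm) s) ∧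
    (∀ s : ℂ, α + 1 < s.re → Of' s = OmegaN N k m (twistC ψ cfp) (twistC ψ cfm) s) ∧
    (∀ s : ℂ, α + 1 < s.re →
      Og s = OmegaN N k m (twistC (conjChar ψ) cgp) (twistC (conjChar ψ) cgm) s) ∧
    Differentiable ℂ Lf ∧ Differentiable ℂ Lg ∧ Differentiable ℂ Of' ∧ Differentiable ℂ Og ∧
    BoundedVert Lf ∧ BoundedVert Lg ∧ BoundedVert Of' ∧ BoundedVert Og ∧
    (∀ s : ℂ, Lf s = Complex.I ^ k * Cψ * Lg ((k : ℂ) - s)) ∧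
    (∀ s : ℂ, Of' s = -(Complex.I ^ k) * Cψ * Og ((k : ℂ) - s))

abbrev SL2Z := Matrix.SpecialLinearGroup (Fin 2) ℤ

/-- Entry of a matrix in `SL₂(ℤ)`. -/
def mEntry (g : SL2Z) (i j : Fin 2) : ℤ := (g : Matrix (Fin 2) (Fin 2) ℤ) i j

/-- Slash by a matrix in `SL₂(ℤ)`. -/
def slashM (k : ℤ) (g : SL2Z) (f : ℂ → ℂ) : ℂ → ℂ :=
  slash k (mEntry g 0 0 : ℂ) (mEntry g 0 1 : ℂ) (mEntry g 1 0 : ℂ) (mEntry g 1 1 : ℂ) f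

/-- `Γ₀(N)` as a subset of `SL₂(ℤ)`. -/
def Gamma0Set (N : ℕ) : Set SL2Z := {g | (N : ℤ) ∣ mEntry g 1 0}

/-- `Γ_∞`, the stabiliser of `i∞` in `SL₂(ℤ)`. -/
def GammaInfSet : Set SL2Z := {g | mEntry g 1 0 = 0}

/-- `Γ_ρ = Γ₀(N) ∩ γ_ρ Γ_∞ γ_ρ⁻¹` for the cusp `ρ = γ_ρ(i∞)`. -/
def GammaCusp (N : ℕ) (γρ : SL2Z) : Set SL2Z :=
  {g | g ∈ Gamma0Set N ∧ γρ⁻¹ * g * γρ ∈ GammaInfSet}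

/-- `R` is a complete set of representatives for `Γ_ρ \ Γ₀(N)`. -/
def IsCosetReps (N : ℕ) (γρ : SL2Z) (R : Set SL2Z) : Prop :=
  R ⊆ Gamma0Set N ∧
    ∀ g ∈ Gamma0Set N, ∃! r : SL2Z, r ∈ R ∧ ∃ γ ∈ GammaCusp N γρ, g = γ * r

/-- `χ(g) := χ(d)` for `g = (a b; c d)`. -/
def chiOf {N : ℕ} (χ : DirichletCharacter ℂ N) (g : SL2Z) : ℂ :=
  χ ((mEntry g 1 1 : ℤ) : ZMod N)

/-- The preimage `𝓕_{k,ρ}(N,χ;τ) = Σ_{g ∈ Γ_ρ\Γ₀(N)} χ̄(g) (v^(1-k)/(1-k))|_k γ_ρ⁻¹ g`,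
computed using a set `R` of coset representatives. -/
def FEis (k : ℤ) (N : ℕ) (χ : DirichletCharacter ℂ N) (γρ : SL2Z) (R : Set SL2Z) : ℂ → ℂ :=
  fun τ => ∑' r : R, (starRingEnd ℂ) (chiOf χ (r : SL2Z)) *
    slashM k (γρ⁻¹ * (r : SL2Z)) (fun z => (z.im : ℂ) ^ (1 - k) / ((1 : ℂ) - (k : ℂ))) τ

/-- The Eisenstein series `E_{2-k,ρ}(N,χ;τ) = Σ_{g ∈ Γ_ρ\Γ₀(N)} χ̄(g) j(γ_ρ⁻¹g, τ)^(k-2)`,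
computed using a set `R` of coset representatives. -/
def EisSeries (k : ℤ) (N : ℕ) (χ : DirichletCharacter ℂ N) (γρ : SL2Z) (R : Set SL2Z) :
    ℂ → ℂ := fun τ => ∑' r : R, (starRingEnd ℂ) (chiOf χ (r : SL2Z)) *
      ((mEntry (γρ⁻¹ * (r : SL2Z)) 1 0 : ℂ) * τ + (mEntry (γρ⁻¹ * (r : SL2Z)) 1 1 : ℂ)) ^ (k - 2)

/-- Two cusps `γν(i∞)` and `γρ(i∞)` are `Γ₀(N)`-equivalent. -/
def CuspEquiv (N : ℕ) (γν γρ : SL2Z) : Prop :=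
  ∃ g ∈ Gamma0Set N, ∃ h ∈ GammaInfSet, γν = g * γρ * h

lemma hasDerivAt_G (n : ℕ) (t : ℝ) :
    HasDerivAt (fun t : ℝ => -(Real.exp (-t) * ∑ l ∈ Finset.range (n+1), t ^ l / l.factorial))
      (Real.exp (-t) * t ^ n / n.factorial) t := by
  have hexp : HasDerivAt (fun t : ℝ => Real.exp (-t)) (Real.exp (-t) * (-1)) t :=
    (hasDerivAt_neg t).exp
  have hsum : HasDerivAt (fun t : ℝ => ∑ l ∈ Finset.range (n+1), t ^ l / l.factorial)
      (∑ l ∈ Finset.range (n+1), (l : ℝ) * t ^ (l - 1) / l.factorial) t := by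
    refine HasDerivAt.fun_sum fun l _ => ?_
    simpa using (hasDerivAt_pow l t).div_const (l.factorial : ℝ)
  have key : (∑ l ∈ Finset.range (n+1), (l : ℝ) * t ^ (l - 1) / l.factorial)
      = ∑ l ∈ Finset.range n, t ^ l / l.factorial := by
    rw [Finset.sum_range_succ']
    simp only [Nat.cast_add, Nat.cast_one, Nat.add_sub_cancel, Nat.factorial_succ,
      Nat.cast_mul, Nat.cast_zero, zero_mul, zero_div, add_zero]
    refine Finset.sum_congr rfl fun l _ => ?_
    have h1 : ((l : ℝ) + 1) ≠ 0 := by positivity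
    field_simp
  have h2 := (hexp.mul hsum).neg
  rw [key] at h2
  refine h2.congr_deriv ?_
  rw [Finset.sum_range_succ]
  have h1 : (n.factorial : ℝ) ≠ 0 := by positivity
  field_simp
  ring

lemma incGamma_nat (n : ℕ) (x : ℝ) (hx : 0 < x) :
    incGamma ((n + 1 : ℕ) : ℝ) x
      = (n.factorial : ℝ) * (Real.exp (-x) * ∑ l ∈ Finset.range (n+1), x ^ l / l.factorial) := by
  have hint : IntegrableOn (fun t : ℝ => Real.exp (-t) * t ^ n / n.factorial) (Ioi x) := by
    have h0 : IntegrableOn (fun t : ℝ => Real.exp (-t) * t ^ ((n + 1 : ℝ) - 1)) (Ioi x) :=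
      (Real.GammaIntegral_convergent (by positivity : (0:ℝ) < n + 1)).mono_set
        (Ioi_subset_Ioi hx.le)
    refine ((h0.congr_fun (fun t ht => ?_) measurableSet_Ioi).div_const _)
    have ht0 : (0:ℝ) < t := hx.trans ht
    rw [show (n + 1 : ℝ) - 1 = (n : ℝ) by ring, Real.rpow_natCast]
  have hlim : Tendsto
      (fun t : ℝ => -(Real.exp (-t) * ∑ l ∈ Finset.range (n+1), t ^ l / l.factorial))
      atTop (nhds 0) := by
    have h1 : Tendsto (fun t : ℝ => ∑ l ∈ Finset.range (n+1), t ^ l * Real.exp (-t) / l.factorial)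
        atTop (nhds 0) := by
      have := tendsto_finset_sum (Finset.range (n+1))
        (fun l (_ : l ∈ Finset.range (n+1)) =>
          (Real.tendsto_pow_mul_exp_neg_atTop_nhds_zero l).div_const (l.factorial : ℝ))
      simpa using this
    have h2 : Tendsto
        (fun t : ℝ => -(∑ l ∈ Finset.range (n+1), t ^ l * Real.exp (-t) / l.factorial))
        atTop (nhds 0) := by simpa using h1.neg
    refine h2.congr fun t => ?_
    rw [Finset.mul_sum]
    congr 1
    refine Finset.sum_congr rfl fun l _ => ?_
    ring
  have hcont : ContinuousWithinAt
      (fun t : ℝ => -(Real.exp (-t) * ∑ l ∈ Finset.range (n+1), t ^ l / l.factorial)) (Ici x) x :=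
    (Continuous.continuousWithinAt (by fun_prop))
  have FTC := integral_Ioi_of_hasDerivAt_of_tendsto hcont (fun t _ => hasDerivAt_G n t) hint hlim
  have key : incGamma ((n + 1 : ℕ) : ℝ) x
      = (n.factorial : ℝ) * ∫ t in Ioi x, Real.exp (-t) * t ^ n / n.factorial := by
    rw [incGamma, ← integral_const_mul]
    refine setIntegral_congr_fun measurableSet_Ioi fun t ht => ?_
    have ht0 : (0:ℝ) < t := hx.trans ht
    have h1 : (n.factorial : ℝ) ≠ 0 := by positivity
    rw [show ((n+1 : ℕ) : ℝ) - 1 = (n : ℝ) by push_cast; ring, Real.rpow_natCast]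
    field_simp
  rw [key, FTC]
  ring

lemma abs_Gamma_le {s : ℂ} (hs : 0 < s.re) : ‖Complex.Gamma s‖ ≤ Real.Gamma s.re := by
  rw [Complex.Gamma_eq_integral hs, Complex.GammaIntegral, Real.Gamma_eq_integral hs]
  refine (norm_integral_le_integral_norm _).trans_eq ?_
  refine setIntegral_congr_fun measurableSet_Ioi fun x hx => ?_
  rw [norm_mul, Complex.norm_real, Real.norm_eq_abs,
    _root_.abs_of_nonneg (Real.exp_pos _).le, Complex.norm_cpow_eq_rpow_re_of_pos hx,
    Complex.sub_re, Complex.one_re]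

lemma Gamma_add_nat (z : ℂ) (hz : z.im ≠ 0) (n : ℕ) :
    Complex.Gamma (z + n) = (∏ j ∈ Finset.range n, (z + j)) * Complex.Gamma z := by
  induction n with
  | zero => simp
  | succ n ih =>
    have hne : z + n ≠ 0 := by
      intro h
      have := congrArg Complex.im h
      simp at this
      exact hz this
    rw [show z + ((n + 1 : ℕ) : ℂ) = (z + n) + 1 by push_cast; ring,
      Complex.Gamma_add_one _ hne, ih, Finset.prod_range_succ]
    ring

/-- **Closed form and rapid decay of `W_ν` on vertical lines** (Lemma 4.4): for a
positive integer `ν` and `Re(s) > 0`,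
`W_ν(s) = Γ(ν) Σ_{l=0}^{ν-1} (2^l/l!) Γ(s+l)`, and on every vertical line
`Re(s) = σ > 0` one has `W_ν(s) = O(|Im s|^{-μ})` for every `μ > 0`. -/
theorem Wnu_closed_form_and_decay (ν : ℕ) (hν : 1 ≤ ν) :
    (∀ s : ℂ, 0 < s.re →
      Wnu (ν : ℝ) s = (Real.Gamma (ν : ℝ) : ℂ) *
        ∑ l ∈ Finset.range ν, ((2 : ℂ) ^ l / (Nat.factorial l : ℂ)) *
          Complex.Gamma (s + (l : ℂ))) ∧
    ∀ σ μ : ℝ, 0 < σ → 0 < μ → ∃ C T : ℝ, ∀ s : ℂ, s.re = σ → T ≤ |s.im| →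
      ‖Wnu (ν : ℝ) s‖ ≤ C * |s.im| ^ (-μ) := by
  obtain ⟨m, rfl⟩ : ∃ m, ν = m + 1 := ⟨ν - 1, (Nat.succ_pred_eq_of_pos hν).symm⟩
  have hGν : Real.Gamma (((m+1 : ℕ)) : ℝ) = m.factorial := by
    push_cast
    exact Real.Gamma_nat_eq_factorial m
  have part1 : ∀ s : ℂ, 0 < s.re →
      Wnu ((m+1 : ℕ) : ℝ) s = (Real.Gamma ((m+1 : ℕ) : ℝ) : ℂ) *
        ∑ l ∈ Finset.range (m+1), ((2 : ℂ) ^ l / (Nat.factorial l : ℂ)) *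
          Complex.Gamma (s + (l : ℂ)) := by
    intro s hs
    have hA : Wnu ((m+1 : ℕ) : ℝ) s = ∫ x in Ioi (0:ℝ),
        ∑ l ∈ Finset.range (m+1), ((m.factorial : ℂ) * 2 ^ l / (l.factorial : ℂ)) *
          (↑(Real.exp (-x)) * (x:ℂ) ^ (s + l - 1)) := by
      rw [Wnu]
      refine setIntegral_congr_fun measurableSet_Ioi fun x hx => ?_
      have hx : (0:ℝ) < x := hx
      have hx2 : (0:ℝ) < 2 * x := by positivity
      have hreal : incGamma ((m+1 : ℕ) : ℝ) (2*x) * Real.exp x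
          = ∑ l ∈ Finset.range (m+1),
              (m.factorial : ℝ) * 2 ^ l / l.factorial * Real.exp (-x) * x ^ l := by
        rw [incGamma_nat m (2*x) hx2]
        simp only [Finset.mul_sum, Finset.sum_mul]
        refine Finset.sum_congr rfl fun l _ => ?_
        have hexp : Real.exp (-(2*x)) * Real.exp x = Real.exp (-x) := by
          rw [← Real.exp_add]; ring_nf
        have h1 : (l.factorial : ℝ) ≠ 0 := by positivity
        rw [mul_pow]
        field_simp [← hexp]
        rw [← hexp]
      have hxC : (x:ℂ) ≠ 0 := by exact_mod_cast hx.ne'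
      have hpow : ∀ l : ℕ, (x:ℂ) ^ (s + l - 1) = (x:ℂ) ^ l * (x:ℂ) ^ (s - 1) := fun l => by
        rw [show s + l - 1 = (l:ℂ) + (s - 1) by ring, Complex.cpow_add _ _ hxC,
          Complex.cpow_natCast]
      rw [hreal]
      push_cast
      rw [Finset.sum_mul]
      refine Finset.sum_congr rfl fun l _ => ?_
      rw [hpow]
      ring
    have hInt : ∀ l ∈ Finset.range (m+1), IntegrableOn
        (fun x : ℝ => ((m.factorial : ℂ) * 2 ^ l / (l.factorial : ℂ)) *
          (↑(Real.exp (-x)) * (x:ℂ) ^ (s + l - 1))) (Ioi (0:ℝ)) := by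
      intro l _
      have hsl : 0 < (s + (l:ℂ)).re := by
        simp only [Complex.add_re, Complex.natCast_re]
        positivity
      have := (Complex.GammaIntegral_convergent hsl).const_mul
        ((m.factorial : ℂ) * 2 ^ l / (l.factorial : ℂ))
      simpa [IntegrableOn] using this
    rw [hA, integral_finset_sum _ hInt]
    rw [hGν, Finset.mul_sum]
    refine Finset.sum_congr rfl fun l _ => ?_
    have hsl : 0 < (s + (l:ℂ)).re := by
      simp only [Complex.add_re, Complex.natCast_re]
      positivity
    rw [integral_const_mul, Complex.Gamma_eq_integral hsl, Complex.GammaIntegral]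
    push_cast
    ring
  refine ⟨part1, ?_⟩
  intro σ μ hσ hμ
  set n := ⌈μ⌉₊ with hn
  refine ⟨Real.Gamma ((m+1 : ℕ) : ℝ) *
    ∑ l ∈ Finset.range (m+1), 2 ^ l / (l.factorial : ℝ) * Real.Gamma (σ + l + n), 1,
    fun s hre him => ?_⟩
  have hs : 0 < s.re := hre ▸ hσ
  have him0 : s.im ≠ 0 := by
    intro h; rw [h] at him; simp at him; linarith
  have habs : (0:ℝ) < |s.im| := by positivity
  have key : ∀ l ∈ Finset.range (m+1),
      ‖((2 : ℂ) ^ l / (Nat.factorial l : ℂ)) * Complex.Gamma (s + (l : ℂ))‖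
        ≤ (2 ^ l / (l.factorial : ℝ) * Real.Gamma (σ + l + n)) * |s.im| ^ (-μ) := by
    intro l _
    have hzim : (s + (l:ℂ)).im ≠ 0 := by simpa using him0
    have hGadd := Gamma_add_nat (s + (l:ℂ)) hzim n
    have hprod : |s.im| ^ n ≤ ‖∏ j ∈ Finset.range n, (s + (l:ℂ) + j)‖ := by
      rw [norm_prod]
      calc |s.im| ^ n = ∏ _j ∈ Finset.range n, |s.im| := by
            rw [Finset.prod_const, Finset.card_range]
        _ ≤ _ := by
            refine Finset.prod_le_prod (fun j _ => abs_nonneg _) fun j _ => ?_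
            have := Complex.abs_im_le_norm (s + (l:ℂ) + j)
            simpa using this
    have hup : ‖Complex.Gamma (s + (l:ℂ) + n)‖ ≤ Real.Gamma (σ + l + n) := by
      have hre2 : (s + (l:ℂ) + (n:ℂ)).re = σ + l + n := by
        simp [Complex.add_re, hre]
      have := abs_Gamma_le (s := s + (l:ℂ) + n) (by rw [hre2]; positivity)
      rwa [hre2] at this
    have hGle : ‖Complex.Gamma (s + (l:ℂ))‖ ≤ Real.Gamma (σ + l + n) / |s.im| ^ n := by
      rw [le_div_iff₀ (by positivity)]
      calc ‖Complex.Gamma (s + (l:ℂ))‖ * |s.im| ^ n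
          ≤ ‖Complex.Gamma (s + (l:ℂ))‖ * ‖∏ j ∈ Finset.range n, (s + (l:ℂ) + j)‖ := by
            exact mul_le_mul_of_nonneg_left hprod (norm_nonneg _)
        _ = ‖Complex.Gamma (s + (l:ℂ) + n)‖ := by rw [hGadd, norm_mul]; ring
        _ ≤ Real.Gamma (σ + l + n) := hup
    have hrpow : Real.Gamma (σ + l + n) / |s.im| ^ n
        ≤ Real.Gamma (σ + l + n) * |s.im| ^ (-μ) := by
      have h1 : Real.Gamma (σ + l + n) / |s.im| ^ n
          = Real.Gamma (σ + l + n) * |s.im| ^ (-(n:ℝ)) := by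
        rw [Real.rpow_neg (abs_nonneg _), Real.rpow_natCast, div_eq_mul_inv]
      rw [h1]
      refine mul_le_mul_of_nonneg_left ?_ (Real.Gamma_pos_of_pos (by positivity)).le
      exact Real.rpow_le_rpow_of_exponent_le him (by simpa using Nat.le_ceil μ)
    have hnorm2 : ‖((2 : ℂ) ^ l / (Nat.factorial l : ℂ))‖ = 2 ^ l / (l.factorial : ℝ) := by
      rw [norm_div, norm_pow]
      norm_num
    rw [norm_mul, hnorm2]
    calc 2 ^ l / (l.factorial : ℝ) * ‖Complex.Gamma (s + (l:ℂ))‖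
        ≤ 2 ^ l / (l.factorial : ℝ) * (Real.Gamma (σ + l + n) * |s.im| ^ (-μ)) := by
          refine mul_le_mul_of_nonneg_left (hGle.trans hrpow) (by positivity)
      _ = (2 ^ l / (l.factorial : ℝ) * Real.Gamma (σ + l + n)) * |s.im| ^ (-μ) := by ring
  rw [part1 s hs, norm_mul]
  have hGpos : (0:ℝ) < Real.Gamma ((m+1 : ℕ) : ℝ) := Real.Gamma_pos_of_pos (by positivity)
  have hnormG : ‖((Real.Gamma ((m+1 : ℕ) : ℝ) : ℂ))‖ = Real.Gamma ((m+1 : ℕ) : ℝ) := by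
    rw [Complex.norm_real, Real.norm_eq_abs, _root_.abs_of_pos hGpos]
  rw [hnormG]
  calc Real.Gamma ((m+1 : ℕ) : ℝ) * ‖∑ l ∈ Finset.range (m+1),
        ((2 : ℂ) ^ l / (Nat.factorial l : ℂ)) * Complex.Gamma (s + (l : ℂ))‖
      ≤ Real.Gamma ((m+1 : ℕ) : ℝ) * ∑ l ∈ Finset.range (m+1),
          (2 ^ l / (l.factorial : ℝ) * Real.Gamma (σ + l + n)) * |s.im| ^ (-μ) := by
        refine mul_le_mul_of_nonneg_left ((norm_sum_le _ _).trans ?_) hGpos.le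
        exact Finset.sum_le_sum key
    _ = (Real.Gamma ((m+1 : ℕ) : ℝ) *
          ∑ l ∈ Finset.range (m+1), 2 ^ l / (l.factorial : ℝ) * Real.Gamma (σ + l + n))
          * |s.im| ^ (-μ) := by
        rw [← Finset.sum_mul]; ring
end
end

section
/- Polynomial growth at cusps from growth near the real line. Let k ∈ ℤ, N ≥ 1 an integer, and χ a Dirichlet character mod N. Let f : ℍ → ℂ be a smooth function with f|_k γ = χ(d) f for every γ = (a b; c d) ∈ Γ₀(N) and Δ_k f = 0. If f(τ) = O(v^{−σ}) as v → 0 for some σ ≥ 0, uniformly in Re(τ), then f has at most polynomial growth at every cusp of Γ₀(N): for every α ∈ SL₂(ℤ) there exists A ≥ 0 such that (f|_k α)(τ) = O(v^{A}) as v → ∞. -/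
open Complex MeasureTheory Set Filter

noncomputable section

section Helpers

lemma denom_ne_zero (c d : ℤ) (hc : c ≠ 0) {τ : ℂ} (hτ : τ ∈ UHP) :
    (c : ℂ) * τ + (d : ℂ) ≠ 0 := by
  intro h0
  have him : (c : ℝ) * τ.im = 0 := by
    have := congrArg Complex.im h0
    simpa using this
  have hcc : (c : ℝ) = 0 := by
    rcases mul_eq_zero.mp him with h | h
    · exact h
    · exact absurd h (ne_of_gt hτ)
  exact hc (by exact_mod_cast hcc)

lemma moebius_im (a b c d : ℤ) (h : a * d - b * c = 1) (τ : ℂ) :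
    (((a : ℂ) * τ + (b : ℂ)) / ((c : ℂ) * τ + (d : ℂ))).im
      = τ.im / Complex.normSq ((c : ℂ) * τ + (d : ℂ)) := by
  have hR : (a : ℝ) * (d : ℝ) - (b : ℝ) * (c : ℝ) = 1 := by exact_mod_cast h
  rw [Complex.div_im]
  have h1 : ((a : ℂ) * τ + (b : ℂ)).im = (a : ℝ) * τ.im := by simp
  have h2 : ((a : ℂ) * τ + (b : ℂ)).re = (a : ℝ) * τ.re + (b : ℝ) := by simp
  have h3 : ((c : ℂ) * τ + (d : ℂ)).im = (c : ℝ) * τ.im := by simp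
  have h4 : ((c : ℂ) * τ + (d : ℂ)).re = (c : ℝ) * τ.re + (d : ℝ) := by simp
  rw [h1, h2, h3, h4, div_sub_div_same]
  congr 1
  linear_combination τ.im * hR

lemma moebius_mem (a b c d : ℤ) (h : a * d - b * c = 1) {τ : ℂ} (hτ : τ ∈ UHP)
    (hden : (c : ℂ) * τ + (d : ℂ) ≠ 0) :
    ((a : ℂ) * τ + (b : ℂ)) / ((c : ℂ) * τ + (d : ℂ)) ∈ UHP := by
  show (0 : ℝ) < _
  rw [moebius_im a b c d h τ]
  exact div_pos hτ (Complex.normSq_pos.mpr hden)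

/-- Slashing with `δ * γ` for `δ ∈ Γ₀(N)` with `χ`-value 1 agrees with slashing with `γ`. -/
lemma slash_left_coset (k : ℤ) (N : ℕ) (χ : DirichletCharacter ℂ N) (f : ℂ → ℂ)
    (hmod : SlashInv k N χ f)
    (p q r s a b c d a2 b2 c2 d2 : ℤ)
    (hδ : p * s - q * r = 1) (hr : (N : ℤ) ∣ r) (hs : ((s : ℤ) : ZMod N) = 1)
    (hγ : a * d - b * c = 1)
    (ha2 : a2 = p * a + q * c) (hb2 : b2 = p * b + q * d)
    (hc2 : c2 = r * a + s * c) (hd2 : d2 = r * b + s * d)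
    (τ : ℂ) (hτ : τ ∈ UHP)
    (hden : (c : ℂ) * τ + (d : ℂ) ≠ 0) (hden2 : (c2 : ℂ) * τ + (d2 : ℂ) ≠ 0) :
    slash k (a2 : ℂ) (b2 : ℂ) (c2 : ℂ) (d2 : ℂ) f τ
      = slash k (a : ℂ) (b : ℂ) (c : ℂ) (d : ℂ) f τ := by
  unfold slash
  set Y : ℂ := (c : ℂ) * τ + (d : ℂ) with hYdef
  set w : ℂ := ((a : ℂ) * τ + (b : ℂ)) / Y with hwdef
  have hwmem : w ∈ UHP := moebius_mem a b c d hγ hτ hden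
  set E : ℂ := (r : ℂ) * w + (s : ℂ) with hEdef
  have hEY : E * Y = (c2 : ℂ) * τ + (d2 : ℂ) := by
    rw [hEdef, hwdef]
    field_simp
    push_cast [hc2]
    push_cast [hd2]
    ring
  have hEne : E ≠ 0 := by
    intro h0
    rw [h0, zero_mul] at hEY
    exact hden2 hEY.symm
  have hnum : ((p : ℂ) * w + (q : ℂ)) * Y = (a2 : ℂ) * τ + (b2 : ℂ) := by
    rw [hwdef]
    field_simp
    push_cast [ha2]
    push_cast [hb2]
    ring
  have harg : ((a2 : ℂ) * τ + (b2 : ℂ)) / ((c2 : ℂ) * τ + (d2 : ℂ))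
      = ((p : ℂ) * w + (q : ℂ)) / E := by
    rw [← hEY, ← hnum, mul_div_mul_right _ _ hden]
  have key := hmod p q r s hδ hr w hwmem
  rw [hs, map_one, one_mul] at key
  unfold slash at key
  have hδC : (p : ℂ) * (s : ℂ) - (q : ℂ) * (r : ℂ) = 1 := by exact_mod_cast hδ
  rw [hδC, Complex.one_cpow, one_mul, ← hEdef] at key
  have hf : f (((p : ℂ) * w + (q : ℂ)) / E) = E ^ k * f w := by
    rw [← key, ← mul_assoc, ← zpow_add₀ hEne]
    simp
  have hdet2C : (a2 : ℂ) * (d2 : ℂ) - (b2 : ℂ) * (c2 : ℂ) = 1 := by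
    have : a2 * d2 - b2 * c2 = 1 := by
      rw [ha2, hb2, hc2, hd2]
      linear_combination (a * d - b * c) * hδ + hγ
    exact_mod_cast this
  have hdetC : (a : ℂ) * (d : ℂ) - (b : ℂ) * (c : ℂ) = 1 := by exact_mod_cast hγ
  rw [hdet2C, hdetC, Complex.one_cpow, one_mul, one_mul, harg, hf, ← hEY, mul_zpow]
  have hone : E ^ (-k) * E ^ k = 1 := by
    rw [← zpow_add₀ hEne]
    simp
  linear_combination (Y ^ (-k) * f w) * hone

/-- Periodicity with period `N` of a slashed modular function. -/
lemma slash_periodic (k : ℤ) (N : ℕ) (χ : DirichletCharacter ℂ N) (f : ℂ → ℂ)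
    (hmod : SlashInv k N χ f) (a b c d : ℤ) (hγ : a * d - b * c = 1) (hc : c ≠ 0)
    (τ : ℂ) (hτ : τ ∈ UHP) :
    slash k (a : ℂ) (b : ℂ) (c : ℂ) (d : ℂ) f (τ + (N : ℂ))
      = slash k (a : ℂ) (b : ℂ) (c : ℂ) (d : ℂ) f τ := by
  have e1 : (c : ℂ) * (τ + (N : ℂ)) + (d : ℂ)
      = (c : ℂ) * τ + ((c * (N : ℤ) + d : ℤ) : ℂ) := by push_cast; ring
  have e2 : (a : ℂ) * (τ + (N : ℂ)) + (b : ℂ)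
      = (a : ℂ) * τ + ((a * (N : ℤ) + b : ℤ) : ℂ) := by push_cast; ring
  have e3 : (a : ℂ) * ((c * (N : ℤ) + d : ℤ) : ℂ)
      - ((a * (N : ℤ) + b : ℤ) : ℂ) * (c : ℂ)
      = (a : ℂ) * (d : ℂ) - (b : ℂ) * (c : ℂ) := by push_cast; ring
  have h1 : slash k (a : ℂ) (b : ℂ) (c : ℂ) (d : ℂ) f (τ + (N : ℂ))
      = slash k (a : ℂ) ((a * (N : ℤ) + b : ℤ) : ℂ) (c : ℂ)
          ((c * (N : ℤ) + d : ℤ) : ℂ) f τ := by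
    unfold slash
    rw [e1, e2, e3]
  rw [h1]
  refine slash_left_coset k N χ f hmod (1 - a * c * (N : ℤ)) (a ^ 2 * (N : ℤ))
    (-(c ^ 2) * (N : ℤ)) (1 + a * c * (N : ℤ)) a b c d
    a (a * (N : ℤ) + b) c (c * (N : ℤ) + d)
    (by ring) ⟨-(c ^ 2), by ring⟩ ?_ hγ
    (by ring) (by linear_combination (-(a * (N : ℤ))) * hγ) (by ring)
    (by linear_combination (-(c * (N : ℤ))) * hγ)
    τ hτ (denom_ne_zero c d hc hτ) (denom_ne_zero c (c * (N : ℤ) + d) hc hτ)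
  push_cast
  simp [ZMod.natCast_self]

lemma add_real_mem {τ : ℂ} (hτ : τ ∈ UHP) (x : ℝ) : τ + (x : ℂ) ∈ UHP := by
  show (0 : ℝ) < _
  have hτ' : (0 : ℝ) < τ.im := hτ
  simpa using hτ'

/-- Periodicity with arbitrary integer multiples of the period. -/
lemma slash_periodic_int (k : ℤ) (N : ℕ) (χ : DirichletCharacter ℂ N) (f : ℂ → ℂ)
    (hmod : SlashInv k N χ f) (a b c d : ℤ) (hγ : a * d - b * c = 1) (hc : c ≠ 0) :
    ∀ m : ℤ, ∀ τ ∈ UHP,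
      slash k (a : ℂ) (b : ℂ) (c : ℂ) (d : ℂ) f (τ + (N : ℂ) * (m : ℂ))
        = slash k (a : ℂ) (b : ℂ) (c : ℂ) (d : ℂ) f τ := by
  intro m
  induction m using Int.induction_on with
  | zero => intro τ hτ; simp
  | succ n ih =>
      intro τ hτ
      have hmem : τ + (N : ℂ) * ((n : ℤ) : ℂ) ∈ UHP := by
        have := add_real_mem hτ ((N : ℝ) * ((n : ℤ) : ℝ))
        simpa [Complex.ofReal_mul] using this
      have e : τ + (N : ℂ) * (((n : ℤ) + 1 : ℤ) : ℂ)
          = (τ + (N : ℂ) * ((n : ℤ) : ℂ)) + (N : ℂ) := by push_cast; ring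
      rw [e, slash_periodic k N χ f hmod a b c d hγ hc _ hmem]
      exact ih τ hτ
  | pred n ih =>
      intro τ hτ
      have hmem : τ + (N : ℂ) * ((-(n : ℤ) - 1 : ℤ) : ℂ) ∈ UHP := by
        have := add_real_mem hτ ((N : ℝ) * ((-(n : ℤ) - 1 : ℤ) : ℝ))
        simpa [Complex.ofReal_mul] using this
      have e : (τ + (N : ℂ) * ((-(n : ℤ) - 1 : ℤ) : ℂ)) + (N : ℂ)
          = τ + (N : ℂ) * ((-(n : ℤ) : ℤ) : ℂ) := by push_cast; ring
      have h2 := slash_periodic k N χ f hmod a b c d hγ hc _ hmem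
      rw [e] at h2
      rw [← h2]
      exact ih τ hτ

end Helpers

set_option maxHeartbeats 1600000 in
/-- **Polynomial growth at cusps from growth near the real line** (Proposition 5.8):
a `Γ₀(N)`-modular harmonic function with `f(τ) = O(v^{-σ})` as `v → 0` (uniformly in
`Re τ`) has at most polynomial growth at every cusp of `Γ₀(N)`. -/
theorem poly_growth_at_cusps_from_growth_near_real_line
    (k : ℤ) (N : ℕ) (hN : 1 ≤ N) (χ : DirichletCharacter ℂ N)
    (f : ℂ → ℂ) (hsmooth : ContDiffOn ℝ (⊤ : ℕ∞) f UHP)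
    (hmod : SlashInv k N χ f)
    (hharm : ∀ τ ∈ UHP, hypLaplacian k f τ = 0)
    (σ : ℝ) (hσ : 0 ≤ σ)
    (hgrowth : ∃ v₁ > (0 : ℝ), ∃ C : ℝ, ∀ τ ∈ UHP, τ.im ≤ v₁ →
      ‖f τ‖ ≤ C * τ.im ^ (-σ)) :
    ∀ a b c d : ℤ, a * d - b * c = 1 →
      ∃ A ≥ (0 : ℝ), ∃ C v₀ : ℝ, ∀ τ ∈ UHP, v₀ ≤ τ.im →
        ‖slash k (a : ℂ) (b : ℂ) (c : ℂ) (d : ℂ) f τ‖ ≤ C * τ.im ^ A := by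
  intro a b c d hdet
  -- Step 1: replace the matrix by one with nonzero lower-left entry
  obtain ⟨a', b', c', d', hdet', hc', heq⟩ :
      ∃ a' b' c' d' : ℤ, a' * d' - b' * c' = 1 ∧ c' ≠ 0 ∧
        ∀ τ ∈ UHP, slash k (a : ℂ) (b : ℂ) (c : ℂ) (d : ℂ) f τ
          = slash k (a' : ℂ) (b' : ℂ) (c' : ℂ) (d' : ℂ) f τ := by
    by_cases hc : c = 0
    · subst hc
      have had : a * d = 1 := by linear_combination hdet
      have hd0 : d ≠ 0 := by
        intro h0; rw [h0, mul_zero] at had; exact one_ne_zero had.symm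
      have ha0 : a ≠ 0 := by
        intro h0; rw [h0, zero_mul] at had; exact one_ne_zero had.symm
      have hN0 : (N : ℤ) ≠ 0 := by exact_mod_cast Nat.one_le_iff_ne_zero.mp hN
      refine ⟨a, b, (N : ℤ) * a, (N : ℤ) * b + d, ?_, mul_ne_zero hN0 ha0, ?_⟩
      · linear_combination had
      · intro τ hτ
        have hden : ((0 : ℤ) : ℂ) * τ + (d : ℂ) ≠ 0 := by
          have : (d : ℂ) ≠ 0 := by exact_mod_cast hd0
          simpa using this
        exact (slash_left_coset k N χ f hmod 1 0 (N : ℤ) 1 a b 0 d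
          a b ((N : ℤ) * a) ((N : ℤ) * b + d)
          (by ring) dvd_rfl (by simp) hdet
          (by ring) (by ring) (by ring) (by ring)
          τ hτ hden
          (denom_ne_zero ((N : ℤ) * a) ((N : ℤ) * b + d) (mul_ne_zero hN0 ha0) hτ)).symm
    · exact ⟨a, b, c, d, hdet, hc, fun τ _ => rfl⟩
  -- Step 2: constants
  obtain ⟨v₁, hv₁, C, hC⟩ := hgrowth
  obtain ⟨C₀, hC₀def⟩ : ∃ x : ℝ, x = max C 0 := ⟨_, rfl⟩
  have hC₀0 : (0 : ℝ) ≤ C₀ := hC₀def ▸ le_max_right _ _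
  obtain ⟨B, hBdef⟩ : ∃ x : ℝ, x = |(c' : ℝ)| * (N : ℝ) + |(d' : ℝ)| + |(c' : ℝ)| := ⟨_, rfl⟩
  have hc1 : (1 : ℝ) ≤ |(c' : ℝ)| := by
    have h1 : (1 : ℤ) ≤ |c'| := Int.one_le_abs hc'
    have : ((1 : ℤ) : ℝ) ≤ ((|c'| : ℤ) : ℝ) := by exact_mod_cast h1
    simpa [Int.cast_abs] using this
  have hN1 : (1 : ℝ) ≤ (N : ℝ) := by exact_mod_cast hN
  have hB1 : (1 : ℝ) ≤ B := by rw [hBdef]; nlinarith [abs_nonneg ((d' : ℝ))]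
  have hB0 : (0 : ℝ) < B := lt_of_lt_of_le one_pos hB1
  obtain ⟨κ, hκdef⟩ : ∃ x : ℝ, x = |((k : ℤ) : ℝ)| := ⟨_, rfl⟩
  have hκ0 : (0 : ℝ) ≤ κ := hκdef ▸ abs_nonneg _
  refine ⟨σ + κ, by positivity, C₀ * B ^ (2 * σ + κ), max 1 (1 / v₁), ?_⟩
  intro τ hτ hv₀
  have hv1' : (1 : ℝ) ≤ τ.im := le_trans (le_max_left _ _) hv₀
  have hvpos : (0 : ℝ) < τ.im := lt_of_lt_of_le one_pos hv1'
  -- Step 3: reduce to the strip 0 ≤ Re ≤ N using periodicity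
  obtain ⟨m, hmdef⟩ : ∃ x : ℤ, x = ⌊τ.re / (N : ℝ)⌋ := ⟨_, rfl⟩
  obtain ⟨z, hzdef⟩ : ∃ x : ℂ, x = τ - (N : ℂ) * (m : ℂ) := ⟨_, rfl⟩
  have hNpos : (0 : ℝ) < (N : ℝ) := lt_of_lt_of_le one_pos hN1
  have hzim : z.im = τ.im := by rw [hzdef]; simp
  have hzre : z.re = τ.re - (N : ℝ) * (m : ℝ) := by rw [hzdef]; simp
  have hzmem : z ∈ UHP := by
    show (0 : ℝ) < z.im
    rw [hzim]; exact hvpos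
  have hzre0 : 0 ≤ z.re := by
    have := Int.sub_floor_div_mul_nonneg τ.re hNpos
    rw [hzre, hmdef]
    linarith [this]
  have hzreN : z.re ≤ (N : ℝ) := by
    have := Int.sub_floor_div_mul_lt τ.re hNpos
    rw [hzre, hmdef]
    linarith [this]
  have hFz : slash k (a' : ℂ) (b' : ℂ) (c' : ℂ) (d' : ℂ) f τ
      = slash k (a' : ℂ) (b' : ℂ) (c' : ℂ) (d' : ℂ) f z := by
    have h2 := slash_periodic_int k N χ f hmod a' b' c' d' hdet' hc' m z hzmem
    have e : z + (N : ℂ) * (m : ℂ) = τ := by rw [hzdef]; ring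
    rw [e] at h2
    exact h2
  -- Step 4: the estimate on the strip
  obtain ⟨Y, hYdef⟩ : ∃ x : ℂ, x = (c' : ℂ) * z + (d' : ℂ) := ⟨_, rfl⟩
  have hYne : Y ≠ 0 := hYdef ▸ denom_ne_zero c' d' hc' hzmem
  obtain ⟨w, hwdef⟩ : ∃ x : ℂ, x = ((a' : ℂ) * z + (b' : ℂ)) / Y := ⟨_, rfl⟩
  have hwmem : w ∈ UHP := by
    rw [hwdef, hYdef]; exact moebius_mem a' b' c' d' hdet' hzmem (hYdef ▸ hYne)
  obtain ⟨t, htdef⟩ : ∃ x : ℝ, x = ‖Y‖ := ⟨_, rfl⟩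
  have ht0 : 0 < t := htdef ▸ norm_pos_iff.mpr hYne
  have hYim : Y.im = (c' : ℝ) * τ.im := by
    rw [hYdef]
    simp [hzim]
  have hlow' : |(c' : ℝ)| * τ.im ≤ t := by
    have h1 : |Y.im| ≤ ‖Y‖ := Complex.abs_im_le_norm Y
    rw [hYim, abs_mul, abs_of_pos hvpos] at h1
    rwa [htdef]
  have hlow : τ.im ≤ t := by nlinarith
  have ht1 : (1 : ℝ) ≤ t := le_trans hv1' hlow
  have hup : t ≤ B * τ.im := by
    have h1 : t ≤ |(c' : ℝ)| * ‖z‖ + |(d' : ℝ)| := by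
      calc t = ‖(c' : ℂ) * z + (d' : ℂ)‖ := by rw [htdef, hYdef]
        _ ≤ ‖(c' : ℂ) * z‖ + ‖(d' : ℂ)‖ := norm_add_le _ _
        _ = |(c' : ℝ)| * ‖z‖ + |(d' : ℝ)| := by
            rw [norm_mul]
            norm_cast
    have h2 : ‖z‖ ≤ |z.re| + |z.im| := by
      exact Complex.norm_le_abs_re_add_abs_im z
    have h3 : |z.re| ≤ (N : ℝ) := abs_le.mpr ⟨by linarith, hzreN⟩
    have h4 : |z.im| = τ.im := by rw [hzim]; exact abs_of_pos hvpos
    have h5 : (0 : ℝ) ≤ ‖z‖ := norm_nonneg _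
    have h6 : |(c' : ℝ)| * ‖z‖ ≤ |(c' : ℝ)| * ((N : ℝ) + τ.im) :=
      mul_le_mul_of_nonneg_left (by linarith) (abs_nonneg _)
    have h7 : t ≤ |(c' : ℝ)| * (N : ℝ) + |(c' : ℝ)| * τ.im + |(d' : ℝ)| := by nlinarith
    rw [hBdef]
    nlinarith [mul_nonneg (mul_nonneg (abs_nonneg ((c' : ℝ)))
        (by linarith : (0 : ℝ) ≤ (N : ℝ))) (by linarith : (0 : ℝ) ≤ τ.im - 1),
      mul_nonneg (abs_nonneg ((d' : ℝ))) (by linarith : (0 : ℝ) ≤ τ.im - 1)]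
  have hwim : w.im = τ.im / t ^ 2 := by
    rw [hwdef, hYdef, moebius_im a' b' c' d' hdet' z, hzim]
    congr 1
    rw [htdef, hYdef, Complex.sq_norm]
  have hwpos : (0 : ℝ) < w.im := by
    rw [hwim]; positivity
  have hwle : w.im ≤ v₁ := by
    have h1 : w.im ≤ τ.im / (τ.im * τ.im) := by
      rw [hwim]
      apply div_le_div_of_nonneg_left hvpos.le (by positivity)
      nlinarith
    have h2 : τ.im / (τ.im * τ.im) = 1 / τ.im := by field_simp
    have h3 : 1 / v₁ ≤ τ.im := le_trans (le_max_right _ _) hv₀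
    have h4 : 1 / τ.im ≤ v₁ := by
      rw [div_le_iff₀ hvpos]
      calc (1 : ℝ) = v₁ * (1 / v₁) := by field_simp
        _ ≤ v₁ * τ.im := by exact mul_le_mul_of_nonneg_left h3 hv₁.le
    rw [h2] at h1
    linarith
  have hf1 : ‖f w‖ ≤ C₀ * w.im ^ (-σ) := by
    refine le_trans (hC w hwmem hwle) ?_
    exact mul_le_mul_of_nonneg_right (hC₀def ▸ le_max_left _ _)
      (Real.rpow_nonneg hwpos.le _)
  have hf2 : w.im ^ (-σ) ≤ (B ^ 2 * τ.im) ^ σ := by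
    rw [Real.rpow_neg hwpos.le, ← Real.inv_rpow hwpos.le]
    apply Real.rpow_le_rpow (inv_nonneg.mpr hwpos.le) ?_ hσ
    rw [hwim, inv_div, div_le_iff₀ hvpos]
    nlinarith [mul_le_mul hup hup ht0.le (by positivity : (0 : ℝ) ≤ B * τ.im)]
  have hzp : t ^ (-k) ≤ (B * τ.im) ^ κ := by
    have e : t ^ (-k) = t ^ (((-k : ℤ) : ℝ)) := (Real.rpow_intCast t (-k)).symm
    rw [e]
    calc t ^ (((-k : ℤ) : ℝ)) ≤ t ^ κ := by
          apply Real.rpow_le_rpow_of_exponent_le ht1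
          rw [hκdef]
          push_cast
          exact neg_le_abs _
      _ ≤ (B * τ.im) ^ κ := Real.rpow_le_rpow ht0.le hup hκ0
  have hdetC : (a' : ℂ) * (d' : ℂ) - (b' : ℂ) * (c' : ℂ) = 1 := by exact_mod_cast hdet'
  have hnorm : ‖slash k (a' : ℂ) (b' : ℂ) (c' : ℂ) (d' : ℂ) f z‖
      = t ^ (-k) * ‖f w‖ := by
    unfold slash
    rw [hdetC, Complex.one_cpow, one_mul, norm_mul, norm_zpow, ← hYdef, ← htdef, ← hwdef]
  have hbound : ‖slash k (a' : ℂ) (b' : ℂ) (c' : ℂ) (d' : ℂ) f z‖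
      ≤ (B * τ.im) ^ κ * (C₀ * (B ^ 2 * τ.im) ^ σ) := by
    rw [hnorm]
    refine mul_le_mul hzp ?_ (norm_nonneg _) (by positivity)
    exact le_trans hf1 (mul_le_mul_of_nonneg_left hf2 hC₀0)
  have hfinal : (B * τ.im) ^ κ * (C₀ * (B ^ 2 * τ.im) ^ σ)
      = C₀ * B ^ (2 * σ + κ) * τ.im ^ (σ + κ) := by
    have e1 : (B * τ.im) ^ κ = B ^ κ * τ.im ^ κ := Real.mul_rpow hB0.le hvpos.le
    have e2 : (B ^ 2 * τ.im) ^ σ = (B ^ 2) ^ σ * τ.im ^ σ :=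
      Real.mul_rpow (by positivity) hvpos.le
    have e3 : ((B ^ 2 : ℝ)) ^ σ = B ^ (2 * σ) := by
      rw [← Real.rpow_natCast B 2, ← Real.rpow_mul hB0.le]
      norm_num
    have e4 : B ^ κ * B ^ (2 * σ) = B ^ (2 * σ + κ) := by
      rw [← Real.rpow_add hB0]; ring_nf
    have e5 : τ.im ^ κ * τ.im ^ σ = τ.im ^ (σ + κ) := by
      rw [← Real.rpow_add hvpos]; ring_nf
    calc (B * τ.im) ^ κ * (C₀ * (B ^ 2 * τ.im) ^ σ)
        = C₀ * (B ^ κ * B ^ (2 * σ)) * (τ.im ^ κ * τ.im ^ σ) := by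
          rw [e1, e2, e3]; ring
      _ = C₀ * B ^ (2 * σ + κ) * τ.im ^ (σ + κ) := by rw [e4, e5]
  rw [heq τ hτ, hFz]
  calc ‖slash k (a' : ℂ) (b' : ℂ) (c' : ℂ) (d' : ℂ) f z‖
      ≤ (B * τ.im) ^ κ * (C₀ * (B ^ 2 * τ.im) ^ σ) := hbound
    _ = C₀ * B ^ (2 * σ + κ) * τ.im ^ (σ + κ) := hfinal
end
end
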